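/- Corollary to the arithmetic-progression structure: if A is the set of parameterized-match positions of P in a window of T forming an arithmetic progression with common difference rho (the p-period of P), then the string pred(T)[(i + m - rho)..(i + m - 1)] is the same for every i in A. -/

import Mathlib

/-- Predecessor value: smallest positive `d ≤ j` with `S (j-d) = S j`, or 0 if none. -/
noncomputable def predVal {α : Type*} (S : ℕ → α) (j : ℕ) : ℕ :=
  sInf {d : ℕ | 0 < d ∧ d ≤ j ∧ S (j - d) = S j}

/-- Parameterized match between the length-`n` strings `S` and `S'`. -/
def PMatch {α : Type*} (n : ℕ) (S S' : ℕ → α) : Prop :=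
  ∃ f : α → α, Function.Injective f ∧ ∀ j < n, S' j = f (S j)

/-- `ρ` is a p-period of the length-`m` string `P`. -/
def IsPPeriod {α : Type*} (m : ℕ) (P : ℕ → α) (ρ : ℕ) : Prop :=
  0 < ρ ∧ ρ < m ∧ PMatch (m - ρ) P (fun k => P (ρ + k))

/-- `ρ` is the p-period (the smallest one) of the length-`m` string `P`. -/
def IsMinPPeriod {α : Type*} (m : ℕ) (P : ℕ → α) (ρ : ℕ) : Prop :=
  IsPPeriod m P ρ ∧ ∀ ρ', IsPPeriod m P ρ' → ρ ≤ ρ'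

/-- The p-period of the length-`n` string `P`. -/
noncomputable def pPeriod {α : Type*} (n : ℕ) (P : ℕ → α) : ℕ :=
  sInf {ρ | IsPPeriod n P ρ}

/-- `a` is the smallest index such that every symbol of the length-`m` string `P`
occurs in `P[0..a]`. -/
def MinAlphaIndex {α : Type*} (m : ℕ) (P : ℕ → α) (a : ℕ) : Prop :=
  (∀ j < m, ∃ i ≤ a, P i = P j) ∧ ∀ a' < a, ¬ (∀ j < m, ∃ i ≤ a', P i = P j)

/-! Two matches at distance less than `m` differ by a p-period, so the matches in the window are
`ρ`-separated. If `(|σ| + 1) ρ ≤ m / 2`, every symbol of `P` already occurs before position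
`|σ| ρ`; hence the permutations realizing two p-periods `ρ ≤ d` commute, matches at `i` and
`i + d` force a match at `i + ρ`, and the matches form a single progression of difference `ρ`.
The last `ρ` positions of `P` are then not first occurrences of their symbols, so every match
copies their predecessor values from `P` into `T`. Otherwise separation leaves at most `|σ| + 1`
matches in the window, and they all go to `Y`. -/

section PredVal

variable {α : Type*} {S : ℕ → α} {j d : ℕ}

lemma predVal_le (hd : 0 < d) (hdj : d ≤ j) (h : S (j - d) = S j) : predVal S j ≤ d :=
  Nat.sInf_le ⟨hd, hdj, h⟩

lemma predVal_pos (hd : 0 < d) (hdj : d ≤ j) (h : S (j - d) = S j) : 0 < predVal S j :=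
  (Nat.sInf_mem (⟨d, hd, hdj, h⟩ : {d | 0 < d ∧ d ≤ j ∧ S (j - d) = S j}.Nonempty)).1

lemma predVal_mem_of_pos (h : 0 < predVal S j) :
    predVal S j ≤ j ∧ S (j - predVal S j) = S j := by
  have hne : {d | 0 < d ∧ d ≤ j ∧ S (j - d) = S j}.Nonempty := by
    by_contra hempty
    rw [Set.not_nonempty_iff_eq_empty] at hempty
    rw [predVal, hempty, Nat.sInf_empty] at h
    exact h.false
  exact (Nat.sInf_mem hne).2

end PredVal

section PMatch

variable {σ : Type*} {m ρ d i j : ℕ} {P T : ℕ → σ}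

lemma PMatch.apply_eq_apply_iff (h : PMatch m P (fun k => T (i + k))) {a b : ℕ}
    (ha : a < m) (hb : b < m) : T (i + a) = T (i + b) ↔ P a = P b := by
  obtain ⟨f, hf, hfP⟩ := h
  beta_reduce at hfP
  rw [hfP a ha, hfP b hb, hf.eq_iff]

lemma PMatch.predVal_add (h : PMatch m P (fun k => T (i + k))) (hj : j < m)
    (hpos : 0 < predVal P j) : predVal T (i + j) = predVal P j := by
  have hshift : ∀ e ≤ j, i + j - e = i + (j - e) := fun e he => by omega
  obtain ⟨hPle, hPeq⟩ := predVal_mem_of_pos hpos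
  have hT : T (i + j - predVal P j) = T (i + j) := by
    rw [hshift _ hPle, h.apply_eq_apply_iff (by omega) hj]
    exact hPeq
  have hTle : predVal T (i + j) ≤ predVal P j := predVal_le hpos (by omega) hT
  have hTpos : 0 < predVal T (i + j) := predVal_pos hpos (by omega) hT
  obtain ⟨-, hTeq⟩ := predVal_mem_of_pos hTpos
  rw [hshift _ (hTle.trans hPle), h.apply_eq_apply_iff (by omega) hj] at hTeq
  exact le_antisymm hTle (predVal_le hTpos (hTle.trans hPle) hTeq)

lemma PMatch.exists_comp [Finite σ] (hi : PMatch m P (fun k => T (i + k)))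
    (hid : PMatch m P (fun k => T (i + d + k))) :
    ∃ f τ : σ → σ, Function.Injective f ∧ Function.Injective τ ∧
      (∀ k < m, T (i + k) = f (P k)) ∧ ∀ k < m, T (i + d + k) = f (τ (P k)) := by
  obtain ⟨f, hf, hfP⟩ := hi
  obtain ⟨g, hg, hgP⟩ := hid
  beta_reduce at hfP hgP
  have hsurj := Finite.injective_iff_surjective.mp hf
  refine ⟨f, Function.surjInv hsurj ∘ g, hf, (Function.injective_surjInv hsurj).comp hg, hfP,
    fun k hk => ?_⟩
  rw [hgP k hk, Function.comp_apply, Function.surjInv_eq hsurj]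

lemma shift_eq_of_comp {f τ : σ → σ} (hf : Function.Injective f)
    (hfP : ∀ k < m, T (i + k) = f (P k)) (hτP : ∀ k < m, T (i + d + k) = f (τ (P k))) :
    ∀ k < m - d, P (d + k) = τ (P k) := fun k hk =>
  hf <| by rw [← hfP _ (by omega), ← hτP _ (by omega), add_assoc]

lemma isPPeriod_of_pMatch [Finite σ] (hd : 0 < d) (hdm : d < m)
    (hi : PMatch m P (fun k => T (i + k))) (hid : PMatch m P (fun k => T (i + d + k))) :
    IsPPeriod m P d := by
  obtain ⟨f, τ, hf, hτ, hfP, hτP⟩ := hi.exists_comp hid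
  exact ⟨hd, hdm, τ, hτ, shift_eq_of_comp hf hfP hτP⟩

lemma shift_comm_apply {π τ : σ → σ} (hπ : ∀ k < m - ρ, P (ρ + k) = π (P k))
    (hτ : ∀ k < m - d, P (d + k) = τ (P k)) (hj : j + ρ + d < m) :
    τ (π (P j)) = π (τ (P j)) := by
  rw [← hπ j (by omega), ← hτ _ (by omega), ← hτ j (by omega), ← hπ _ (by omega),
    Nat.add_left_comm]

end PMatch

section FirstOccurrence

def IsFirstOcc {σ : Type*} (P : ℕ → σ) (x : ℕ) : Prop :=
  ∀ y < x, P y ≠ P x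

variable {σ : Type*} {m ρ x : ℕ} {P : ℕ → σ} {π : σ → σ}

lemma IsFirstOcc.sub (hx : IsFirstOcc P x) (hπ : ∀ k < m - ρ, P (ρ + k) = π (P k))
    (hρx : ρ ≤ x) (hxm : x < m) : IsFirstOcc P (x - ρ) := by
  intro y hy hPy
  apply hx (ρ + y) (by omega)
  rw [hπ y (by omega), hPy, ← hπ (x - ρ) (by omega), Nat.add_sub_cancel' hρx]

lemma IsFirstOcc.sub_mul (hx : IsFirstOcc P x) (hπ : ∀ k < m - ρ, P (ρ + k) = π (P k))
    (hxm : x < m) : ∀ a, a * ρ ≤ x → IsFirstOcc P (x - a * ρ)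
  | 0, _ => by simpa using hx
  | a + 1, ha => by
    rw [Nat.succ_mul] at ha ⊢
    rw [← Nat.sub_sub]
    exact (hx.sub_mul hπ hxm a (by omega)).sub hπ (by omega) (by omega)

/-- The positions `x, x - ρ, x - 2ρ, …` are first occurrences, so they carry pairwise distinct
symbols. -/
lemma IsFirstOcc.lt_card_mul [Fintype σ] (hx : IsFirstOcc P x) (hρ : 0 < ρ)
    (hπ : ∀ k < m - ρ, P (ρ + k) = π (P k)) (hxm : x < m) : x < Fintype.card σ * ρ := by
  have hle : ∀ a : Fin (x / ρ + 1), (a : ℕ) * ρ ≤ x := fun a =>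
    (Nat.le_div_iff_mul_le hρ).mp (Nat.lt_succ_iff.mp a.isLt)
  have hne : ∀ a b : Fin (x / ρ + 1), a < b → P (x - b * ρ) ≠ P (x - a * ρ) := fun a b hab =>
    have hab' : (a : ℕ) * ρ < b * ρ := Nat.mul_lt_mul_of_pos_right hab hρ
    hx.sub_mul hπ hxm a (hle a) _ (Nat.sub_lt_sub_left (hab'.trans_le (hle b)) hab')
  have hinj : Function.Injective fun a : Fin (x / ρ + 1) => P (x - a * ρ) := by
    intro a b hab
    rcases lt_trichotomy a b with h | h | h
    · exact absurd hab.symm (hne a b h)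
    · exact h
    · exact absurd hab (hne b a h)
  have hcard := Fintype.card_le_of_injective _ hinj
  rw [Fintype.card_fin] at hcard
  exact (Nat.div_lt_iff_lt_mul hρ).mp hcard

lemma exists_lt_card_mul_eq [Fintype σ] (hρ : 0 < ρ) (hπ : ∀ k < m - ρ, P (ρ + k) = π (P k))
    {j : ℕ} (hj : j < m) : ∃ j₀ < Fintype.card σ * ρ, P j₀ = P j := by
  classical
  have hex : ∃ u, P u = P j := ⟨j, rfl⟩
  have hfirst : IsFirstOcc P (Nat.find hex) := fun y hy hPy =>
    Nat.find_min hex hy (hPy.trans (Nat.find_spec hex))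
  exact ⟨Nat.find hex, hfirst.lt_card_mul hρ hπ ((Nat.find_min' hex rfl).trans_lt hj),
    Nat.find_spec hex⟩

end FirstOccurrence

section PPeriod

variable {σ : Type*} [Fintype σ] {m ρ d i j : ℕ} {P T : ℕ → σ}

lemma PMatch.predVal_add_of_card_mul_le (h : PMatch m P (fun k => T (i + k)))
    (hπ : PMatch (m - ρ) P (fun k => P (ρ + k))) (hρ : 0 < ρ) (hjm : j < m)
    (hj : Fintype.card σ * ρ ≤ j) : predVal T (i + j) = predVal P j := by
  obtain ⟨π, -, hπP⟩ := hπ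
  obtain ⟨j₀, hj₀, hPj₀⟩ := exists_lt_card_mul_eq hρ hπP hjm
  refine h.predVal_add hjm (predVal_pos (d := j - j₀) (by omega) (by omega) ?_)
  rwa [Nat.sub_sub_self (by omega)]

/-- The permutations realizing the p-periods `ρ` and `d` commute on every symbol, because every
symbol already occurs before position `|σ| ρ`, where both shifts are defined. -/
lemma PMatch.add_pPeriod (hi : PMatch m P (fun k => T (i + k)))
    (hid : PMatch m P (fun k => T (i + d + k))) (hπ : PMatch (m - ρ) P (fun k => P (ρ + k)))
    (hρ : 0 < ρ) (hρd : ρ ≤ d) (hdm : d + (Fintype.card σ + 1) * ρ ≤ m) :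
    PMatch m P (fun k => T (i + ρ + k)) := by
  obtain ⟨π, hπi, hπP⟩ := hπ
  beta_reduce at hπP
  obtain ⟨f, τ, hf, -, hfP, hτP⟩ := hi.exists_comp hid
  have hτ := shift_eq_of_comp hf hfP hτP
  have hbound : Fintype.card σ * ρ + ρ + d ≤ m := by rw [Nat.succ_mul] at hdm; omega
  refine ⟨f ∘ π, hf.comp hπi, fun k hk => ?_⟩
  by_cases hkρ : k < m - ρ
  · show T (i + ρ + k) = f (π (P k))
    rw [add_assoc, hfP _ (by omega), hπP k hkρ]
  · obtain ⟨j, rfl⟩ : ∃ j, k = d + j := ⟨k - d, by omega⟩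
    obtain ⟨j₀, hj₀, hPj₀⟩ := exists_lt_card_mul_eq hρ hπP (show j < m by omega)
    calc T (i + ρ + (d + j)) = T (i + d + (ρ + j)) := by congr 1; omega
      _ = f (τ (π (P j))) := by rw [hτP _ (by omega), hπP j (by omega)]
      _ = f (π (τ (P j))) := by rw [← hPj₀, shift_comm_apply hπP hτ (by omega)]
      _ = (f ∘ π) (P (d + j)) := by rw [hτ j (by omega), Function.comp_apply]

lemma IsMinPPeriod.le_sub_of_pMatch {i' : ℕ} (hρ : IsMinPPeriod m P ρ)
    (hi : PMatch m P (fun k => T (i + k))) (hi' : PMatch m P (fun k => T (i' + k)))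
    (hii' : i < i') (him : i' - i < m) : ρ ≤ i' - i := by
  refine hρ.2 _ (isPPeriod_of_pMatch (by omega) him hi ?_)
  rwa [Nat.add_sub_cancel' hii'.le]

lemma IsMinPPeriod.pMatch_add {i' : ℕ} (hρ : IsMinPPeriod m P ρ)
    (hi : PMatch m P (fun k => T (i + k))) (hi' : PMatch m P (fun k => T (i' + k)))
    (hii' : i < i') (him : i' - i + (Fintype.card σ + 1) * ρ ≤ m) :
    PMatch m P (fun k => T (i + ρ + k)) := by
  refine hi.add_pPeriod ?_ hρ.1.2.2 hρ.1.1 (hρ.le_sub_of_pMatch hi hi' hii' ?_) him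
  · rwa [Nat.add_sub_cancel' hii'.le]
  · have : ρ ≤ (Fintype.card σ + 1) * ρ := Nat.le_mul_of_pos_left ρ (Nat.succ_pos _)
    have := hρ.1.1
    omega

end PPeriod

section Progression

variable {S : Set ℕ} {ρ : ℕ}

lemma Set.ncard_sub_one_mul_le_of_separated {t w : ℕ} (hρ : 0 < ρ)
    (hS : ∀ x ∈ S, t ≤ x ∧ x ≤ t + w) (hgap : ∀ x ∈ S, ∀ y ∈ S, x < y → ρ ≤ y - x) :
    (S.ncard - 1) * ρ ≤ w := by
  have hmaps : ∀ x ∈ S, (x - t) / ρ ∈ Set.Iio (w / ρ + 1) := fun x hx =>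
    Nat.lt_succ_of_le (Nat.div_le_div_right (by have := hS x hx; omega))
  have hmono : StrictMonoOn (fun x => (x - t) / ρ) S := fun x hx y hy hxy =>
    calc (x - t) / ρ < (x - t + ρ) / ρ := by rw [Nat.add_div_right _ hρ]; exact Nat.lt_succ_self _
      _ ≤ (y - t) / ρ := Nat.div_le_div_right (by have := hgap x hx y hy hxy; have := hS x hx; omega)
  have hcard := Set.ncard_le_ncard_of_injOn _ hmaps hmono.injOn
  rw [Set.ncard_Iio_nat] at hcard
  calc (S.ncard - 1) * ρ ≤ w / ρ * ρ := Nat.mul_le_mul_right _ (Nat.sub_le_iff_le_add.mpr hcard)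
    _ ≤ w := Nat.div_mul_le_self w ρ

lemma Set.Finite.eq_image_arithProg (hS : S.Finite) (hρ : 0 < ρ)
    (hgap : ∀ x ∈ S, ∀ y ∈ S, x < y → ρ ≤ y - x) (hstep : ∀ x ∈ S, ∀ y ∈ S, x < y → x + ρ ∈ S) :
    ∃ i₀ L : ℕ, S = (fun k => i₀ + k * ρ) '' Set.Iio L := by
  rcases S.eq_empty_or_nonempty with rfl | hne
  · exact ⟨0, 0, by simp⟩
  obtain ⟨i₀, hi₀, hmin⟩ := Set.exists_min_image S id hS hne
  obtain ⟨iN, hiN, hmax⟩ := Set.exists_max_image S id hS hne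
  simp only [id] at hmin hmax
  have hprog : ∀ a, i₀ + a * ρ ≤ iN → i₀ + a * ρ ∈ S := by
    intro a
    induction a with
    | zero => simpa using fun _ => hi₀
    | succ a ih =>
      intro ha
      rw [Nat.succ_mul, ← add_assoc] at ha ⊢
      exact hstep _ (ih (by omega)) iN hiN (by omega)
  refine ⟨i₀, (iN - i₀) / ρ + 1, Set.ext fun x => ⟨fun hx => ?_, ?_⟩⟩
  · have hx₀ : i₀ ≤ x := hmin x hx
    obtain ⟨a, ha⟩ : ∃ a, a = (x - i₀) / ρ := ⟨_, rfl⟩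
    have hax : i₀ + a * ρ ≤ x := by have := Nat.div_mul_le_self (x - i₀) ρ; rw [← ha] at this; omega
    have haS : i₀ + a * ρ ∈ S := hprog a (hax.trans (hmax x hx))
    have hxa : x = i₀ + a * ρ := by
      by_contra hne
      have := hgap _ haS x hx (by omega)
      have := Nat.lt_div_mul_add (a := x - i₀) hρ
      rw [← ha] at this
      omega
    refine ⟨a, Nat.lt_succ_of_le ?_, hxa.symm⟩
    exact ha ▸ Nat.div_le_div_right (by have := hmax x hx; omega)
  · rintro ⟨a, ha, rfl⟩
    have := (Nat.le_div_iff_mul_le hρ).mp (Nat.lt_succ_iff.mp ha)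
    exact hprog a (by have := hmin iN hiN; omega)

end Progression

/-- Corollary to the arithmetic-progression structure lemma: the partition of the match
positions can be chosen so that, for the arithmetic progression A, the predecessor string
pred(T)[(i+m-ρ)..(i+m-1)] is the same for every i in A. -/
theorem pred_same_on_progression {σ : Type*} [Fintype σ] (m ρ t : ℕ) (P T : ℕ → σ)
    (hρ : IsMinPPeriod m P ρ) :
    ∃ (Y A : Set ℕ) (i0 L : ℕ),
      {i : ℕ | t ≤ i ∧ 2 * (i + m) ≤ 2 * t + 3 * m ∧ PMatch m P (fun k => T (i + k))}
        = Y ∪ A ∧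
      Disjoint Y A ∧
      Y.Finite ∧ Y.ncard ≤ 6 * Fintype.card σ ∧
      (∀ y ∈ Y, ∀ x ∈ A, y < x) ∧
      A = (fun k => i0 + k * ρ) '' (Set.Iio L) ∧
      (∀ i ∈ A, ∀ i' ∈ A, ∀ d < ρ,
        predVal T (i + m - ρ + d) = predVal T (i' + m - ρ + d)) := by
  set M := {i : ℕ | t ≤ i ∧ 2 * (i + m) ≤ 2 * t + 3 * m ∧ PMatch m P (fun k => T (i + k))}
  have hρ0 : 0 < ρ := hρ.1.1
  have hwin : ∀ i ∈ M, t ≤ i ∧ i ≤ t + m / 2 := fun i hi => ⟨hi.1, by have := hi.2.1; omega⟩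
  have hgap : ∀ i ∈ M, ∀ i' ∈ M, i < i' → ρ ≤ i' - i := fun i hi i' hi' hii' =>
    hρ.le_sub_of_pMatch hi.2.2 hi'.2.2 hii' (by have := hwin i hi; have := hwin i' hi'; omega)
  have hMfin : M.Finite := (Set.finite_Icc t (t + m / 2)).subset hwin
  by_cases hsmall : (Fintype.card σ + 1) * ρ ≤ m / 2
  · have hstep : ∀ i ∈ M, ∀ i' ∈ M, i < i' → i + ρ ∈ M := fun i hi i' hi' hii' => by
      have := hwin i hi
      have := hwin i' hi'
      have := hgap i hi i' hi' hii'
      exact ⟨by omega, by omega, hρ.pMatch_add hi.2.2 hi'.2.2 hii' (by omega)⟩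
    obtain ⟨i0, L, hAP⟩ := hMfin.eq_image_arithProg hρ0 hgap hstep
    have hpred : ∀ i ∈ M, ∀ d < ρ, predVal T (i + m - ρ + d) = predVal P (m - ρ + d) :=
      fun i hi d hd => by
        rw [Nat.add_sub_assoc hρ.1.2.1.le, add_assoc]
        rw [Nat.succ_mul] at hsmall
        exact hi.2.2.predVal_add_of_card_mul_le hρ.1.2.2 hρ0 (by omega) (by omega)
    refine ⟨∅, M, i0, L, (Set.empty_union M).symm, Set.empty_disjoint M, Set.finite_empty,
      by simp, by simp, hAP, fun i hi i' hi' d hd => by rw [hpred i hi d hd, hpred i' hi' d hd]⟩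
  · have hcard : M.ncard - 1 < Fintype.card σ + 1 := Nat.lt_of_mul_lt_mul_right <|
      (Set.ncard_sub_one_mul_le_of_separated hρ0 hwin hgap).trans_lt (not_le.mp hsmall)
    have hσ : 0 < Fintype.card σ := Fintype.card_pos_iff.mpr ⟨P 0⟩
    exact ⟨M, ∅, 0, 0, (Set.union_empty M).symm, Set.disjoint_empty M, hMfin, by omega,
      by simp, by simp, by simp⟩
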